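/- Let c > 0 be a real number, let g : ℕ → ℝ be a nonnegative function with g(n) ≥ 4c/5, set p(n) := n^{−g(n)}, and let s₁ := max{⌈25/c⌉, 3}. Then for every integer n ≥ 1 and every integer s ≥ s₁, the expected number of cliques of size s in the Erdős–Rényi random graph G(n,p(n)) is at most n^{−2}. -/

import Mathlib

open MeasureTheory
open scoped Classical

noncomputable def bernoulliMeasure (p : ℝ) : Measure Bool :=
  (PMF.bernoulli (min (Real.toNNReal p) 1) (min_le_right _ _)).toMeasure

noncomputable def erdosRenyi (n : ℕ) (p : ℝ) : Measure (Sym2 (Fin n) → Bool) :=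
  Measure.pi fun _ => bernoulliMeasure p

def IsCompleteOn {n : ℕ} (ω : Sym2 (Fin n) → Bool) (S : Finset (Fin n)) : Prop :=
  ∀ u ∈ S, ∀ v ∈ S, u ≠ v → ω s(u, v) = true

noncomputable def cliqueCount (n s : ℕ) (ω : Sym2 (Fin n) → Bool) : ℕ :=
  (Finset.univ.filter fun S : Finset (Fin n) => S.card = s ∧ IsCompleteOn ω S).card

/-!
Each `s`-set is a clique with probability `p ^ (s choose 2)`, so the expected number of
`s`-cliques is `(n choose s) p ^ (s choose 2) ≤ n ^ (s - g(n) (s choose 2))`. Since `g(n) s ≥ 20`,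
the exponent is at most `s - 10 (s - 1) ≤ -2`.
-/

instance (p : ℝ) : IsProbabilityMeasure (bernoulliMeasure p) :=
  PMF.toMeasure.isProbabilityMeasure _

instance (n : ℕ) (p : ℝ) : IsProbabilityMeasure (erdosRenyi n p) := by
  unfold erdosRenyi
  infer_instance

lemma bernoulliMeasure_singleton_true {p : ℝ} (hp : p ≤ 1) :
    bernoulliMeasure p {true} = ENNReal.ofReal p := by
  rw [bernoulliMeasure, PMF.toMeasure_apply_singleton _ _ (measurableSet_singleton _),
    PMF.bernoulli_apply, min_eq_left (Real.toNNReal_le_one.2 hp)]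
  rfl

lemma setOf_isCompleteOn_eq_pi {n : ℕ} (S : Finset (Fin n)) :
    {ω : Sym2 (Fin n) → Bool | IsCompleteOn ω S} =
      (↑(S.offDiag.image Sym2.mk.uncurry) : Set (Sym2 (Fin n))).pi fun _ => {true} := by
  ext ω
  simp only [IsCompleteOn, Set.mem_ofPred_eq, Set.mem_pi, Finset.coe_image, Set.mem_image,
    Finset.mem_coe, Finset.mem_offDiag, Set.mem_singleton_iff]
  constructor
  · rintro h _ ⟨⟨u, v⟩, ⟨hu, hv, huv⟩, rfl⟩
    exact h u hu v hv huv
  · exact fun h u hu v hv huv => h s(u, v) ⟨(u, v), ⟨hu, hv, huv⟩, rfl⟩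

lemma measurableSet_isCompleteOn {n : ℕ} (S : Finset (Fin n)) :
    MeasurableSet {ω : Sym2 (Fin n) → Bool | IsCompleteOn ω S} := by
  rw [setOf_isCompleteOn_eq_pi]
  exact .pi (Finset.countable_toSet _) fun _ _ => trivial

lemma erdosRenyi_setOf_isCompleteOn {n : ℕ} {p : ℝ} (hp : p ≤ 1) (S : Finset (Fin n)) :
    erdosRenyi n p {ω | IsCompleteOn ω S} = ENNReal.ofReal p ^ S.card.choose 2 := by
  rw [setOf_isCompleteOn_eq_pi, erdosRenyi, Measure.pi_pi_finset,
    Finset.prod_const, Sym2.card_image_offDiag, bernoulliMeasure_singleton_true hp]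

lemma cliqueCount_eq_sum_indicator (n s : ℕ) (ω : Sym2 (Fin n) → Bool) :
    (cliqueCount n s ω : ℝ) =
      ∑ S ∈ Finset.univ.powersetCard s, {ω | IsCompleteOn ω S}.indicator 1 ω := by
  rw [cliqueCount, ← Finset.filter_filter, ← Finset.powerset_univ,
    ← Finset.powersetCard_eq_filter, Finset.card_filter, Nat.cast_sum]
  refine Finset.sum_congr rfl fun S _ => ?_
  by_cases hS : IsCompleteOn ω S <;> simp [hS]

theorem integral_cliqueCount_erdosRenyi (n s : ℕ) {p : ℝ} (hp₀ : 0 ≤ p) (hp₁ : p ≤ 1) :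
    ∫ ω, (cliqueCount n s ω : ℝ) ∂erdosRenyi n p = n.choose s * p ^ s.choose 2 := by
  simp_rw [cliqueCount_eq_sum_indicator]
  rw [integral_finsetSum _ fun S _ =>
    (integrable_const 1).indicator (measurableSet_isCompleteOn S)]
  have hterm : ∀ S ∈ Finset.univ.powersetCard s,
      ∫ ω, {ω | IsCompleteOn ω S}.indicator 1 ω ∂erdosRenyi n p = p ^ s.choose 2 := by
    intro S hS
    rw [integral_indicator_one (measurableSet_isCompleteOn S), measureReal_def,
      erdosRenyi_setOf_isCompleteOn hp₁, (Finset.mem_powersetCard.1 hS).2, ENNReal.toReal_pow,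
      ENNReal.toReal_ofReal hp₀]
  rw [Finset.sum_congr rfl hterm, Finset.sum_const, Finset.card_powersetCard, Finset.card_univ,
    Fintype.card_fin, nsmul_eq_mul]

lemma choose_mul_rpow_neg_pow_le {n : ℕ} (hn : 1 ≤ n) (s : ℕ) (γ : ℝ) :
    n.choose s * ((n : ℝ) ^ (-γ)) ^ s.choose 2 ≤ (n : ℝ) ^ (s - γ * s.choose 2) := by
  have hn₀ : (0 : ℝ) < n := by exact_mod_cast hn
  rw [← Real.rpow_natCast ((n : ℝ) ^ (-γ)), ← Real.rpow_mul hn₀.le, sub_eq_add_neg,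
    Real.rpow_add hn₀, neg_mul, Real.rpow_natCast]
  gcongr
  exact_mod_cast Nat.choose_le_pow n s

lemma natCast_sub_mul_choose_two_le {s : ℕ} {γ : ℝ} (hs : 2 ≤ s) (hγs : 20 ≤ γ * s) :
    (s : ℝ) - γ * s.choose 2 ≤ -2 := by
  have hs' : (2 : ℝ) ≤ s := by exact_mod_cast hs
  rw [Nat.cast_choose_two]
  nlinarith [mul_le_mul_of_nonneg_right hγs (by linarith : (0 : ℝ) ≤ s - 1)]

/-- Let `c > 0`, `g ≥ 0` with `g(n) ≥ 4c/5`, `p(n) = n^{−g(n)}`, and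
`s₁ := max ⌈25/c⌉ 3`. Then for every `n ≥ 1` and every `s ≥ s₁`, the expected number of
cliques of size `s` in `G(n, p(n))` is at most `n^{−2}`. -/
theorem erdosRenyi_expected_cliqueCount_le_inv_sq
    (c : ℝ) (hc : 0 < c) (g : ℕ → ℝ) (hg : ∀ m, 0 ≤ g m)
    (hgc : ∀ m, 4 * c / 5 ≤ g m)
    (s₁ : ℕ) (hs₁ : s₁ = max ⌈(25 : ℝ) / c⌉₊ 3)
    (n : ℕ) (hn : 1 ≤ n) (s : ℕ) (hs : s₁ ≤ s) :
    ∫ ω, (cliqueCount n s ω : ℝ) ∂ erdosRenyi n ((n : ℝ) ^ (-(g n))) ≤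
      (n : ℝ) ^ (-2 : ℝ) := by
  have hn₁ : (1 : ℝ) ≤ n := by exact_mod_cast hn
  have hp₀ : 0 ≤ (n : ℝ) ^ (-(g n)) := by positivity
  have hp₁ : (n : ℝ) ^ (-(g n)) ≤ 1 :=
    Real.rpow_le_one_of_one_le_of_nonpos hn₁ (neg_nonpos.2 (hg n))
  obtain ⟨hs_ceil, hs₃⟩ := max_le_iff.1 (hs₁ ▸ hs)
  have hcs : 25 ≤ c * s := by
    have : (25 : ℝ) / c ≤ s := (Nat.le_ceil _).trans (by exact_mod_cast hs_ceil)
    rwa [div_le_iff₀ hc, mul_comm] at this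
  have hgs : 20 ≤ g n * s := by
    nlinarith [mul_le_mul_of_nonneg_right (hgc n) (Nat.cast_nonneg s : (0 : ℝ) ≤ s)]
  rw [integral_cliqueCount_erdosRenyi n s hp₀ hp₁]
  exact (choose_mul_rpow_neg_pow_le hn s (g n)).trans <|
    Real.rpow_le_rpow_of_exponent_le hn₁ (natCast_sub_mul_choose_two_le (by omega) hgs)
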